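/- Let A₁ = ⟨Σ, V₁, α₁, β₁, {τ_{1,σ}}⟩ and A₂ = ⟨Σ, V₂, α₂, β₂, {τ_{2,σ}}⟩ be weighted finite automata over the same alphabet Σ, and let γ > 0 satisfy γ·max{ρ(A₁), ρ(A₂)} < 1. Let A = A₁ − A₂ be their difference automaton on V = V₁ ⊕ V₂ with initial vector α = α₁ ⊕ (−α₂), and let s_{A,γ} be the unique fixed point of F_{A,γ}. Then the γ-bisimulation distance d_γ(A₁,A₂) := s_{A,γ}(α) satisfies d_γ(A₁,A₂) = sup_{x∈Σ^∞} Σ_{t=0}^∞ γ^t |f_{A₁}(x_{≤t}) − f_{A₂}(x_{≤t})|. -/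

import Mathlib

open Filter Topology ENNReal

noncomputable section

/-- For a finite string `x = x₁⋯x_t`, `wordMap τ x = τ_{x_t} ∘ ⋯ ∘ τ_{x_1}`. -/
def wordMap {Sig : Type*} {V : Type*} [AddCommGroup V] [Module ℝ V]
    (τ : Sig → V →ₗ[ℝ] V) : List Sig → V →ₗ[ℝ] V
  | [] => LinearMap.id
  | σ :: x => (wordMap τ x).comp (τ σ)

/-- The length-`t` prefix of an infinite string `x ∈ Σ^∞`. -/
def strPrefix {Sig : Type*} (x : ℕ → Sig) (t : ℕ) : List Sig :=
  List.ofFn fun i : Fin t => x i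

/-- The joint spectral radius of the family of transition maps of a WFA. -/
def jsr {Sig : Type*} [Fintype Sig] {V : Type*} [NormedAddCommGroup V]
    [NormedSpace ℝ V] [FiniteDimensional ℝ V] (τ : Sig → V →ₗ[ℝ] V) : ℝ :=
  Filter.limsup (fun t : ℕ =>
    (⨆ x : Fin t → Sig, ‖LinearMap.toContinuousLinearMap (wordMap τ (List.ofFn x))‖)
      ^ ((1 : ℝ) / t)) Filter.atTop

namespace Stmt4Aux

set_option linter.unusedSectionVars false

theorem wordMap_append {Sig V : Type*} [AddCommGroup V] [Module ℝ V] (τ : Sig → V →ₗ[ℝ] V) :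
    ∀ l₁ l₂ : List Sig, wordMap τ (l₁ ++ l₂) = (wordMap τ l₂).comp (wordMap τ l₁)
  | [], l₂ => by simp [wordMap]
  | σ :: l₁, l₂ => by
    rw [List.cons_append]
    show (wordMap τ (l₁ ++ l₂)).comp (τ σ) = _
    rw [wordMap_append τ l₁ l₂, LinearMap.comp_assoc]
    rfl

theorem strPrefix_succ_left {Sig : Type*} (x : ℕ → Sig) (t : ℕ) :
    strPrefix x (t + 1) = x 0 :: strPrefix (fun i => x (i + 1)) t := by
  simp [strPrefix, List.ofFn_succ]

theorem strPrefix_succ_right {Sig : Type*} (x : ℕ → Sig) (t : ℕ) :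
    strPrefix x (t + 1) = strPrefix x t ++ [x t] := by
  simp only [strPrefix, List.ofFn_succ', Fin.coe_castSucc, Fin.val_last, List.concat_eq_append]

/-- A seminorm on a finite-dimensional real normed space is bounded by the norm. -/
theorem seminorm_bound {W : Type*} [NormedAddCommGroup W] [NormedSpace ℝ W]
    [FiniteDimensional ℝ W] (s : Seminorm ℝ W) :
    ∃ C : ℝ, 0 ≤ C ∧ ∀ v : W, s v ≤ C * ‖v‖ := by
  set b := Module.finBasis ℝ W
  refine ⟨∑ i, ‖LinearMap.toContinuousLinearMap (b.coord i)‖ * s (b i),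
    Finset.sum_nonneg fun i _ => mul_nonneg (norm_nonneg _) (apply_nonneg _ _), fun v => ?_⟩
  calc s v = s (∑ i, b.repr v i • b i) := by rw [Module.Basis.sum_repr]
    _ ≤ ∑ i, s (b.repr v i • b i) :=
        Finset.le_sum_of_subadditive s (map_zero s).le (fun x y => map_add_le_add s x y) _ _
    _ ≤ ∑ i, (‖LinearMap.toContinuousLinearMap (b.coord i)‖ * s (b i)) * ‖v‖ := by
        refine Finset.sum_le_sum fun i _ => ?_
        rw [map_smul_eq_mul]
        have h1 : ‖b.repr v i‖ ≤ ‖LinearMap.toContinuousLinearMap (b.coord i)‖ * ‖v‖ := by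
          simpa using (LinearMap.toContinuousLinearMap (b.coord i)).le_opNorm v
        calc ‖b.repr v i‖ * s (b i)
            ≤ (‖LinearMap.toContinuousLinearMap (b.coord i)‖ * ‖v‖) * s (b i) :=
              mul_le_mul_of_nonneg_right h1 (apply_nonneg _ _)
          _ = (‖LinearMap.toContinuousLinearMap (b.coord i)‖ * s (b i)) * ‖v‖ := by ring
    _ = (∑ i, ‖LinearMap.toContinuousLinearMap (b.coord i)‖ * s (b i)) * ‖v‖ :=
        (Finset.sum_mul ..).symm

section JSR

variable {Sig : Type*} [Fintype Sig] [Nonempty Sig]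
variable {V : Type*} [NormedAddCommGroup V] [NormedSpace ℝ V] [FiniteDimensional ℝ V]

/-- The sup of word norms at length `n`. -/
def wsup (τ : Sig → V →ₗ[ℝ] V) (n : ℕ) : ℝ :=
  ⨆ x : Fin n → Sig, ‖LinearMap.toContinuousLinearMap (wordMap τ (List.ofFn x))‖

theorem wsup_bdd (τ : Sig → V →ₗ[ℝ] V) (n : ℕ) :
    BddAbove (Set.range fun x : Fin n → Sig =>
      ‖LinearMap.toContinuousLinearMap (wordMap τ (List.ofFn x))‖) :=
  (Set.finite_range _).bddAbove

theorem wsup_nonneg (τ : Sig → V →ₗ[ℝ] V) (n : ℕ) : 0 ≤ wsup τ n :=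
  le_trans (norm_nonneg _) (le_ciSup (wsup_bdd τ n) (Classical.arbitrary _))

theorem le_wsup (τ : Sig → V →ₗ[ℝ] V) {n : ℕ} (x : Fin n → Sig) :
    ‖LinearMap.toContinuousLinearMap (wordMap τ (List.ofFn x))‖ ≤ wsup τ n :=
  le_ciSup (wsup_bdd τ n) x

theorem norm_wordMap_le (τ : Sig → V →ₗ[ℝ] V) :
    ∀ l : List Sig, ‖LinearMap.toContinuousLinearMap (wordMap τ l)‖ ≤
      (max 1 (⨆ σ : Sig, ‖LinearMap.toContinuousLinearMap (τ σ)‖)) ^ l.length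
  | [] => by
      simp only [wordMap, List.length_nil, pow_zero]
      exact ContinuousLinearMap.opNorm_le_bound _ zero_le_one fun v => by simp
  | σ :: l => by
      set M := max 1 (⨆ σ : Sig, ‖LinearMap.toContinuousLinearMap (τ σ)‖) with hM
      have hM0 : (0:ℝ) ≤ M := le_trans zero_le_one (le_max_left _ _)
      have hτ : ‖LinearMap.toContinuousLinearMap (τ σ)‖ ≤ M :=
        le_trans (le_ciSup (f := fun σ : Sig => ‖LinearMap.toContinuousLinearMap (τ σ)‖)
          ((Set.finite_range _).bddAbove) σ) (le_max_right _ _)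
      have hl := norm_wordMap_le τ l
      rw [List.length_cons, pow_succ]
      refine ContinuousLinearMap.opNorm_le_bound _
        (mul_nonneg (pow_nonneg hM0 _) hM0) fun v => ?_
      calc ‖wordMap τ l (τ σ v)‖
            ≤ ‖LinearMap.toContinuousLinearMap (wordMap τ l)‖ * ‖τ σ v‖ :=
              (LinearMap.toContinuousLinearMap (wordMap τ l)).le_opNorm (τ σ v)
          _ ≤ M ^ l.length * (M * ‖v‖) := by
              refine mul_le_mul hl ?_ (norm_nonneg _) (pow_nonneg hM0 _)
              calc ‖τ σ v‖ ≤ ‖LinearMap.toContinuousLinearMap (τ σ)‖ * ‖v‖ :=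
                    (LinearMap.toContinuousLinearMap (τ σ)).le_opNorm v
                _ ≤ M * ‖v‖ := mul_le_mul_of_nonneg_right hτ (norm_nonneg _)
          _ = M ^ l.length * M * ‖v‖ := by ring

theorem tendsto_pow_mul_wsup (τ : Sig → V →ₗ[ℝ] V) (γ : ℝ) (hγ : 0 < γ)
    (h : γ * jsr τ < 1) :
    Tendsto (fun n : ℕ => γ ^ n * wsup τ n) atTop (𝓝 0) := by
  set M := max 1 (⨆ σ : Sig, ‖LinearMap.toContinuousLinearMap (τ σ)‖) with hM
  have hM1 : (1:ℝ) ≤ M := le_max_left _ _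
  have hM0 : (0:ℝ) < M := lt_of_lt_of_le one_pos hM1
  have hwM : ∀ n : ℕ, wsup τ n ≤ M ^ n := fun n =>
    ciSup_le fun x => le_trans (norm_wordMap_le τ _) (by rw [List.length_ofFn])
  have hub : ∀ n : ℕ, wsup τ n ^ ((1:ℝ) / n) ≤ M := by
    intro n
    rcases Nat.eq_zero_or_pos n with rfl | hn
    · simp [Real.rpow_natCast]
      norm_num
      exact hM1
    · have h1 : wsup τ n ^ ((1:ℝ)/n) ≤ (M ^ n) ^ ((1:ℝ)/n) :=
        Real.rpow_le_rpow (wsup_nonneg τ n) (hwM n) (by positivity)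
      have h2 : ((M:ℝ) ^ n) ^ ((1:ℝ)/n) = M := by
        rw [← Real.rpow_natCast M n, ← Real.rpow_mul hM0.le]
        rw [mul_one_div, div_self (by exact_mod_cast hn.ne'), Real.rpow_one]
      exact h1.trans h2.le
  have hbdd : IsBoundedUnder (· ≤ ·) atTop
      (fun n : ℕ => wsup τ n ^ ((1:ℝ) / n)) := Filter.isBoundedUnder_of ⟨M, hub⟩
  have hρ : jsr τ < 1 / γ := by
    rw [lt_div_iff₀ hγ]; linarith [h, mul_comm γ (jsr τ)]
  set c : ℝ := max ((jsr τ + 1 / γ) / 2) (1 / (2 * γ)) with hc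
  have hc0 : 0 < c := lt_of_lt_of_le (by positivity) (le_max_right _ _)
  have hcρ : jsr τ < c := lt_of_lt_of_le (by linarith) (le_max_left _ _)
  have hγc : γ * c < 1 := by
    have h1 : (jsr τ + 1 / γ) / 2 < 1 / γ := by linarith
    have h2 : 1 / (2 * γ) < 1 / γ := by
      rw [div_lt_div_iff₀ (by positivity) hγ]; linarith
    have hlt : c < 1 / γ := max_lt h1 h2
    calc γ * c < γ * (1 / γ) := mul_lt_mul_of_pos_left hlt hγ
      _ = 1 := by field_simp
  have hev : ∀ᶠ n : ℕ in atTop, wsup τ n ^ ((1:ℝ)/n) < c :=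
    eventually_lt_of_limsup_lt hcρ hbdd
  have hev2 : ∀ᶠ n : ℕ in atTop, γ ^ n * wsup τ n ≤ (γ * c) ^ n := by
    filter_upwards [hev, eventually_ge_atTop 1] with n hn hn1
    have hb : wsup τ n ≤ c ^ n := by
      have heq : wsup τ n = (wsup τ n ^ ((1:ℝ)/n)) ^ (n:ℕ) := by
        rw [← Real.rpow_natCast (wsup τ n ^ ((1:ℝ)/n)) n, ← Real.rpow_mul (wsup_nonneg τ n)]
        rw [one_div, inv_mul_cancel₀ (by exact_mod_cast Nat.one_le_iff_ne_zero.mp hn1),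
          Real.rpow_one]
      rw [heq]
      exact pow_le_pow_left₀ (Real.rpow_nonneg (wsup_nonneg τ n) _) hn.le n
    calc γ ^ n * wsup τ n ≤ γ ^ n * c ^ n :=
          mul_le_mul_of_nonneg_left hb (pow_nonneg hγ.le n)
      _ = (γ * c) ^ n := (mul_pow γ c n).symm
  refine squeeze_zero' (Filter.Eventually.of_forall fun n =>
    mul_nonneg (pow_nonneg hγ.le n) (wsup_nonneg τ n)) hev2 ?_
  exact tendsto_pow_atTop_nhds_zero_of_lt_one (by positivity) hγc

end JSR

section Unroll

variable {Sig : Type*} [Fintype Sig] [Nonempty Sig]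
variable {V : Type*} [NormedAddCommGroup V] [NormedSpace ℝ V]
variable (τ : Sig → V →ₗ[ℝ] V) (γ : ℝ) (φ : V → ℝ) (s : Seminorm ℝ V)

theorem sup_bdd (v : V) : BddAbove (Set.range fun σ : Sig => s (τ σ v)) :=
  (Set.finite_range _).bddAbove

theorem partial_le (hγ : 0 ≤ γ)
    (hs : ∀ v : V, s v = |φ v| + γ * ⨆ σ : Sig, s (τ σ v)) :
    ∀ (n : ℕ) (v : V) (x : ℕ → Sig),
      (∑ t ∈ Finset.range n, γ ^ t * |φ (wordMap τ (strPrefix x t) v)|) ≤ s v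
  | 0, v, x => by simpa using apply_nonneg s v
  | n + 1, v, x => by
    rw [Finset.sum_range_succ']
    have hrec := partial_le hγ hs n (τ (x 0) v) (fun i => x (i + 1))
    have hstep : ∀ t : ℕ, wordMap τ (strPrefix x (t + 1)) v
        = wordMap τ (strPrefix (fun i => x (i + 1)) t) (τ (x 0) v) := by
      intro t
      rw [strPrefix_succ_left]
      rfl
    calc (∑ t ∈ Finset.range n, γ ^ (t + 1) * |φ (wordMap τ (strPrefix x (t + 1)) v)|)
          + γ ^ 0 * |φ (wordMap τ (strPrefix x 0) v)|
        = |φ v| + γ * ∑ t ∈ Finset.range n,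
            γ ^ t * |φ (wordMap τ (strPrefix (fun i => x (i + 1)) t) (τ (x 0) v))| := by
          rw [Finset.mul_sum]
          simp only [hstep, pow_succ, pow_zero, one_mul]
          have h1 : ∀ t ∈ Finset.range n, γ ^ t * γ *
              |φ (wordMap τ (strPrefix (fun i => x (i+1)) t) (τ (x 0) v))|
              = γ * (γ ^ t * |φ (wordMap τ (strPrefix (fun i => x (i+1)) t) (τ (x 0) v))|) :=
            fun t _ => by ring
          rw [Finset.sum_congr rfl h1]
          have h2 : wordMap τ (strPrefix x 0) v = v := rfl
          rw [h2, add_comm]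
      _ ≤ |φ v| + γ * s (τ (x 0) v) :=
          add_le_add_right (mul_le_mul_of_nonneg_left hrec hγ) _
      _ ≤ |φ v| + γ * ⨆ σ : Sig, s (τ σ v) := by
          refine add_le_add_right (mul_le_mul_of_nonneg_left ?_ hγ) _
          exact le_ciSup (sup_bdd τ s v) (x 0)
      _ = s v := (hs v).symm

theorem greedy_exists (hs : ∀ v : V, s v = |φ v| + γ * ⨆ σ : Sig, s (τ σ v)) (v : V) :
    ∃ xs : ℕ → Sig, ∀ n : ℕ,
      s v = (∑ t ∈ Finset.range n, γ ^ t * |φ (wordMap τ (strPrefix xs t) v)|)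
        + γ ^ n * s (wordMap τ (strPrefix xs n) v) := by
  have hpk : ∀ w : V, ∃ σ : Sig, s (τ σ w) = ⨆ σ' : Sig, s (τ σ' w) :=
    fun w => exists_eq_ciSup_of_finite
  set pk : V → Sig := fun w => (hpk w).choose with hpk_def
  have hpk_spec : ∀ w : V, s (τ (pk w) w) = ⨆ σ' : Sig, s (τ σ' w) :=
    fun w => (hpk w).choose_spec
  set vseq : ℕ → V := fun n => Nat.rec v (fun _ w => τ (pk w) w) n with hvseq
  have hv0 : vseq 0 = v := rfl
  have hvsucc : ∀ n, vseq (n + 1) = τ (pk (vseq n)) (vseq n) := fun n => rfl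
  refine ⟨fun n => pk (vseq n), fun n => ?_⟩
  have hword : ∀ m : ℕ, wordMap τ (strPrefix (fun k => pk (vseq k)) m) v = vseq m := by
    intro m
    induction m with
    | zero => rfl
    | succ m ih =>
      rw [strPrefix_succ_right, wordMap_append]
      show wordMap τ [pk (vseq m)] (wordMap τ (strPrefix (fun k => pk (vseq k)) m) v) = _
      rw [ih, hvsucc]
      rfl
  simp only [hword]
  induction n with
  | zero => simp [hv0]
  | succ n ih =>
    rw [Finset.sum_range_succ, ih]
    have h1 : s (vseq n) = |φ (vseq n)| + γ * s (vseq (n + 1)) := by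
      rw [hs (vseq n), hvsucc, hpk_spec]
    rw [h1]
    ring

end Unroll

end Stmt4Aux

open Stmt4Aux in
/-- The `γ`-bisimulation distance `d_γ(A₁,A₂) = s_{A,γ}(α)` (where
`A = A₁ − A₂` is the difference automaton and `s_{A,γ}` the fixed point of `F_{A,γ}`)
equals `sup_{x∈Σ^∞} Σ_t γ^t |f_{A₁}(x_{≤t}) − f_{A₂}(x_{≤t})|`. -/
theorem stmt4 {Sig : Type*} [Fintype Sig] [Nonempty Sig]
    {V₁ : Type*} [NormedAddCommGroup V₁] [NormedSpace ℝ V₁] [FiniteDimensional ℝ V₁]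
    {V₂ : Type*} [NormedAddCommGroup V₂] [NormedSpace ℝ V₂] [FiniteDimensional ℝ V₂]
    (α₁ : V₁) (β₁ : V₁ →ₗ[ℝ] ℝ) (τ₁ : Sig → V₁ →ₗ[ℝ] V₁)
    (α₂ : V₂) (β₂ : V₂ →ₗ[ℝ] ℝ) (τ₂ : Sig → V₂ →ₗ[ℝ] V₂)
    (γ : ℝ) (hγ : 0 < γ) (hρ : γ * max (jsr τ₁) (jsr τ₂) < 1)
    (s : Seminorm ℝ (V₁ × V₂))
    (hs : ∀ v : V₁ × V₂, s v = |β₁ v.1 + β₂ v.2| +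
        γ * ⨆ σ : Sig, s (LinearMap.prodMap (τ₁ σ) (τ₂ σ) v)) :
    ENNReal.ofReal (s (α₁, -α₂)) =
      ⨆ x : ℕ → Sig, ∑' t : ℕ,
        ENNReal.ofReal (γ ^ t * |β₁ (wordMap τ₁ (strPrefix x t) α₁) -
          β₂ (wordMap τ₂ (strPrefix x t) α₂)|) := by
  set τ : Sig → (V₁ × V₂) →ₗ[ℝ] (V₁ × V₂) := fun σ => (τ₁ σ).prodMap (τ₂ σ) with hτdef
  set φ : V₁ × V₂ → ℝ := fun v => β₁ v.1 + β₂ v.2 with hφdef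
  set v₀ : V₁ × V₂ := (α₁, -α₂) with hv₀def
  have hsv : ∀ v : V₁ × V₂, s v = |φ v| + γ * ⨆ σ : Sig, s (τ σ v) := hs
  have hwm : ∀ l : List Sig, wordMap τ l = (wordMap τ₁ l).prodMap (wordMap τ₂ l) := by
    intro l
    induction l with
    | nil => rfl
    | cons σ l ih =>
      show (wordMap τ l).comp (τ σ) = _
      rw [ih, hτdef]
      exact LinearMap.prodMap_comp (τ₁ σ) (wordMap τ₁ l) (τ₂ σ) (wordMap τ₂ l)
  have hterm : ∀ l : List Sig,
      φ (wordMap τ l v₀) = β₁ (wordMap τ₁ l α₁) - β₂ (wordMap τ₂ l α₂) := by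
    intro l
    rw [hwm]
    simp [hφdef, hv₀def, LinearMap.prodMap_apply, map_neg, sub_eq_add_neg]
  have hgoal : ∀ (x : ℕ → Sig) (t : ℕ),
      γ ^ t * |β₁ (wordMap τ₁ (strPrefix x t) α₁) - β₂ (wordMap τ₂ (strPrefix x t) α₂)|
      = γ ^ t * |φ (wordMap τ (strPrefix x t) v₀)| := by
    intro x t; rw [hterm]
  simp only [hgoal]
  -- tail estimates
  obtain ⟨C, hC0, hC⟩ := seminorm_bound s
  have hTw : Tendsto (fun n : ℕ => γ ^ n * wsup τ n) atTop (𝓝 0) := by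
    have h1 := tendsto_pow_mul_wsup τ₁ γ hγ
      (lt_of_le_of_lt (mul_le_mul_of_nonneg_left (le_max_left _ _) hγ.le) hρ)
    have h2 := tendsto_pow_mul_wsup τ₂ γ hγ
      (lt_of_le_of_lt (mul_le_mul_of_nonneg_left (le_max_right _ _) hγ.le) hρ)
    have hw : ∀ n : ℕ, wsup τ n ≤ max (wsup τ₁ n) (wsup τ₂ n) := by
      intro n
      have hB0 : 0 ≤ max (wsup τ₁ n) (wsup τ₂ n) :=
        le_trans (wsup_nonneg τ₁ n) (le_max_left _ _)
      refine ciSup_le fun x => ?_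
      rw [hwm]
      refine ContinuousLinearMap.opNorm_le_bound _ hB0 fun v => ?_
      have hv : (LinearMap.toContinuousLinearMap
          ((wordMap τ₁ (List.ofFn x)).prodMap (wordMap τ₂ (List.ofFn x)))) v
          = (wordMap τ₁ (List.ofFn x) v.1, wordMap τ₂ (List.ofFn x) v.2) := rfl
      rw [hv, Prod.norm_def]
      refine max_le ?_ ?_
      · calc ‖wordMap τ₁ (List.ofFn x) v.1‖
            ≤ ‖LinearMap.toContinuousLinearMap (wordMap τ₁ (List.ofFn x))‖ * ‖v.1‖ :=
              (LinearMap.toContinuousLinearMap (wordMap τ₁ (List.ofFn x))).le_opNorm v.1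
          _ ≤ wsup τ₁ n * ‖v‖ :=
              mul_le_mul (le_wsup τ₁ x) (norm_fst_le v) (norm_nonneg _) (wsup_nonneg τ₁ n)
          _ ≤ max (wsup τ₁ n) (wsup τ₂ n) * ‖v‖ :=
              mul_le_mul_of_nonneg_right (le_max_left _ _) (norm_nonneg _)
      · calc ‖wordMap τ₂ (List.ofFn x) v.2‖
            ≤ ‖LinearMap.toContinuousLinearMap (wordMap τ₂ (List.ofFn x))‖ * ‖v.2‖ :=
              (LinearMap.toContinuousLinearMap (wordMap τ₂ (List.ofFn x))).le_opNorm v.2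
          _ ≤ wsup τ₂ n * ‖v‖ :=
              mul_le_mul (le_wsup τ₂ x) (norm_snd_le v) (norm_nonneg _) (wsup_nonneg τ₂ n)
          _ ≤ max (wsup τ₁ n) (wsup τ₂ n) * ‖v‖ :=
              mul_le_mul_of_nonneg_right (le_max_right _ _) (norm_nonneg _)
    have hmaxT : Tendsto (fun n : ℕ => max (γ ^ n * wsup τ₁ n) (γ ^ n * wsup τ₂ n))
        atTop (𝓝 0) := by simpa using h1.max h2
    refine squeeze_zero (fun n => mul_nonneg (pow_nonneg hγ.le n) (wsup_nonneg τ n))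
      (fun n => ?_) hmaxT
    calc γ ^ n * wsup τ n ≤ γ ^ n * max (wsup τ₁ n) (wsup τ₂ n) :=
          mul_le_mul_of_nonneg_left (hw n) (pow_nonneg hγ.le n)
      _ ≤ max (γ ^ n * wsup τ₁ n) (γ ^ n * wsup τ₂ n) := by
          rcases max_cases (wsup τ₁ n) (wsup τ₂ n) with ⟨h, _⟩ | ⟨h, _⟩ <;> rw [h]
          · exact le_max_left _ _
          · exact le_max_right _ _
  -- greedy string
  obtain ⟨xs, hxs⟩ := greedy_exists τ γ φ s hsv v₀
  have htail : Tendsto (fun n : ℕ => γ ^ n * s (wordMap τ (strPrefix xs n) v₀))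
      atTop (𝓝 0) := by
    have hb : ∀ n : ℕ, γ ^ n * s (wordMap τ (strPrefix xs n) v₀)
        ≤ (γ ^ n * wsup τ n) * (C * ‖v₀‖) := by
      intro n
      have h1 : s (wordMap τ (strPrefix xs n) v₀) ≤ C * (wsup τ n * ‖v₀‖) := by
        refine le_trans (hC _) (mul_le_mul_of_nonneg_left ?_ hC0)
        calc ‖wordMap τ (strPrefix xs n) v₀‖
            = ‖(LinearMap.toContinuousLinearMap (wordMap τ (strPrefix xs n))) v₀‖ := rfl
          _ ≤ ‖LinearMap.toContinuousLinearMap (wordMap τ (strPrefix xs n))‖ * ‖v₀‖ :=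
              ContinuousLinearMap.le_opNorm _ _
          _ ≤ wsup τ n * ‖v₀‖ :=
              mul_le_mul_of_nonneg_right (le_wsup τ fun i : Fin n => xs i) (norm_nonneg _)
      calc γ ^ n * s (wordMap τ (strPrefix xs n) v₀)
          ≤ γ ^ n * (C * (wsup τ n * ‖v₀‖)) :=
            mul_le_mul_of_nonneg_left h1 (pow_nonneg hγ.le n)
        _ = (γ ^ n * wsup τ n) * (C * ‖v₀‖) := by ring
    have hlim : Tendsto (fun n : ℕ => (γ ^ n * wsup τ n) * (C * ‖v₀‖)) atTop (𝓝 0) := by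
      simpa using hTw.mul_const (C * ‖v₀‖)
    exact squeeze_zero (fun n => mul_nonneg (pow_nonneg hγ.le n) (apply_nonneg s _)) hb hlim
  have hPv : Tendsto (fun n : ℕ =>
      ∑ t ∈ Finset.range n, γ ^ t * |φ (wordMap τ (strPrefix xs t) v₀)|)
      atTop (𝓝 (s v₀)) := by
    have : (fun n : ℕ => ∑ t ∈ Finset.range n, γ ^ t * |φ (wordMap τ (strPrefix xs t) v₀)|)
        = fun n => s v₀ - γ ^ n * s (wordMap τ (strPrefix xs n) v₀) := by
      funext n
      rw [hxs n]
      ring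
    rw [this]
    simpa using tendsto_const_nhds.sub htail
  -- nonnegativity of terms
  have hnn : ∀ (x : ℕ → Sig) (t : ℕ), 0 ≤ γ ^ t * |φ (wordMap τ (strPrefix x t) v₀)| :=
    fun x t => mul_nonneg (pow_nonneg hγ.le t) (abs_nonneg _)
  apply le_antisymm
  · -- `≤`: use the greedy string
    refine le_trans ?_ (le_iSup (fun x : ℕ → Sig => ∑' t : ℕ,
      ENNReal.ofReal (γ ^ t * |φ (wordMap τ (strPrefix x t) v₀)|)) xs)
    rw [ENNReal.tsum_eq_iSup_nat]
    have hcont : Tendsto (fun n : ℕ => ENNReal.ofReal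
        (∑ t ∈ Finset.range n, γ ^ t * |φ (wordMap τ (strPrefix xs t) v₀)|))
        atTop (𝓝 (ENNReal.ofReal (s v₀))) :=
      (ENNReal.continuous_ofReal.tendsto _).comp hPv
    refine le_of_tendsto hcont (Filter.Eventually.of_forall fun n => ?_)
    have heq : ENNReal.ofReal (∑ t ∈ Finset.range n, γ ^ t * |φ (wordMap τ (strPrefix xs t) v₀)|)
        = ∑ t ∈ Finset.range n, ENNReal.ofReal (γ ^ t * |φ (wordMap τ (strPrefix xs t) v₀)|) :=
      ENNReal.ofReal_sum_of_nonneg fun t _ => hnn xs t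
    rw [heq]
    exact le_iSup (fun i : ℕ => ∑ t ∈ Finset.range i,
      ENNReal.ofReal (γ ^ t * |φ (wordMap τ (strPrefix xs t) v₀)|)) n
  · -- `≥`: partial sums are bounded by `s v₀`
    refine iSup_le fun x => ?_
    rw [ENNReal.tsum_eq_iSup_nat]
    refine iSup_le fun n => ?_
    have heq : (∑ t ∈ Finset.range n, ENNReal.ofReal (γ ^ t * |φ (wordMap τ (strPrefix x t) v₀)|))
        = ENNReal.ofReal (∑ t ∈ Finset.range n, γ ^ t * |φ (wordMap τ (strPrefix x t) v₀)|) :=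
      (ENNReal.ofReal_sum_of_nonneg fun t _ => hnn x t).symm
    rw [heq]
    exact ENNReal.ofReal_le_ofReal (partial_le τ γ φ s hγ.le hsv n v₀ x)
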